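/- arXiv:2504.17477 — 3 statements merged into one kernel-verified Lean document; each statement's English description precedes it below -/
import Mathlib

section
/- Let g : ℝ^d → [0,∞) be measurable, let β > 1 and α > d(β−1). Then ∫ g(x) dx ≤ C_{α,β,d} (∫ g(x)^β dx)^{(α−d(β−1))/(αβ)} (∫ |x|^α g(x)^β dx)^{d(β−1)/(αβ)}, where C_{α,β,d} = (α/(d(β−1)))^{1/β} (d(β−1)/(α−d(β−1)))^{(α−d(β−1))/(αβ)} ((2π^{d/2}/Γ(d/2)) · (1/α) · I_{α,β,d})^{(β−1)/β} and I_{α,β,d} = ∫₀^∞ s^{d/α−1}/(1+s)^{1/(β−1)} ds. -/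
/-!
With the weight `w(x) = 1 + t |x| ^ α`, Hölder's inequality applied to
`g = (g w ^ (1/β)) w ^ (-1/β)` gives
`∫ g ≤ (∫ g ^ β + t ∫ |x| ^ α g ^ β) ^ (1/β) (∫ w ^ (-1/(β-1))) ^ ((β-1)/β)`.
In polar coordinates, and after the substitution `s = t r ^ α`, the last integral equals
`(2 π ^ (d/2) / Γ(d/2)) t ^ (-d/α) I / α`; it is finite exactly because `α > d (β - 1)`.
Choosing the optimal `t > 0` gives the constant.
-/

open MeasureTheory ProbabilityTheory Real Filter Set
open scoped ENNReal NNReal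

noncomputable def WpPow {d : ℕ} (p : ℝ) (μ ν : Measure (EuclideanSpace ℝ (Fin d))) : ℝ :=
  sInf {c : ℝ | ∃ cpl : Measure (EuclideanSpace ℝ (Fin d) × EuclideanSpace ℝ (Fin d)),
    IsProbabilityMeasure cpl ∧ cpl.map Prod.fst = μ ∧ cpl.map Prod.snd = ν ∧
    c = ∫ z, ‖z.1 - z.2‖ ^ p ∂cpl}

/-- The p-Wasserstein distance. -/
noncomputable def Wp {d : ℕ} (p : ℝ) (μ ν : Measure (EuclideanSpace ℝ (Fin d))) : ℝ :=
  (WpPow p μ ν) ^ (1 / p)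

/-- Density of the centered Gaussian with covariance σ²I_d. -/
noncomputable def gaussianPdf (d : ℕ) (σ : ℝ) (x : EuclideanSpace ℝ (Fin d)) : ℝ :=
  (2 * Real.pi) ^ (-(d : ℝ) / 2) * σ ^ (-(d : ℝ)) * Real.exp (-‖x‖ ^ 2 / (2 * σ ^ 2))

/-- The centered Gaussian measure with covariance σ²I_d on ℝ^d. -/
noncomputable def gaussianMeasure (d : ℕ) (σ : ℝ) : Measure (EuclideanSpace ℝ (Fin d)) :=
  volume.withDensity (fun x => ENNReal.ofReal (gaussianPdf d σ x))

/-- Convolution of two measures on ℝ^d. -/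
noncomputable def mconv {d : ℕ} (μ ν : Measure (EuclideanSpace ℝ (Fin d))) :
    Measure (EuclideanSpace ℝ (Fin d)) :=
  (μ.prod ν).map (fun z => z.1 + z.2)

/-- Empirical measure of the points X 0, ..., X (N-1). -/
noncomputable def empMeasure {d : ℕ} (N : ℕ) (X : ℕ → EuclideanSpace ℝ (Fin d)) :
    Measure (EuclideanSpace ℝ (Fin d)) :=
  ((N : ℝ≥0∞))⁻¹ • ∑ k ∈ Finset.range N, Measure.dirac (X k)

open Metric Module

lemma integrableOn_Ioi_rpow_mul_one_add_rpow_neg {p q c m : ℝ} (hp : -1 < p) (hq : 0 < q)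
    (hm : 0 < m) (hpqc : p - q * c < -1) :
    IntegrableOn (fun y : ℝ => y ^ p * (1 + m * y ^ q) ^ (-c)) (Ioi 0) := by
  have hc : 0 ≤ c := by nlinarith
  have hmeas : AEStronglyMeasurable (fun y : ℝ => y ^ p * (1 + m * y ^ q) ^ (-c))
      (volume.restrict (Ioi 0)) := by fun_prop
  -- Near `0` the second factor is at most `1`; near `∞` it is at most `(m y ^ q) ^ (-c)`.
  have h_Ioc : IntegrableOn (fun y : ℝ => y ^ p * (1 + m * y ^ q) ^ (-c)) (Ioc 0 1) := by
    refine Integrable.mono' (intervalIntegral.intervalIntegrable_rpow' hp).1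
      (hmeas.mono_set Ioc_subset_Ioi_self) ?_
    filter_upwards [ae_restrict_mem measurableSet_Ioc] with y hy
    obtain ⟨hy0, -⟩ := hy
    have h1 : 1 ≤ 1 + m * y ^ q := by have := rpow_pos_of_pos hy0 q; nlinarith
    rw [norm_of_nonneg (by positivity)]
    exact mul_le_of_le_one_right (by positivity) (rpow_le_one_of_one_le_of_nonpos h1 (by linarith))
  have h_Ioi : IntegrableOn (fun y : ℝ => y ^ p * (1 + m * y ^ q) ^ (-c)) (Ioi 1) := by
    refine Integrable.mono' ((integrableOn_Ioi_rpow_of_lt hpqc zero_lt_one).const_mul (m ^ (-c)))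
      (hmeas.mono_set (Ioi_subset_Ioi zero_le_one)) ?_
    filter_upwards [ae_restrict_mem measurableSet_Ioi] with y hy
    have hy0 : 0 < y := zero_lt_one.trans hy
    have hmy : 0 < m * y ^ q := by positivity
    rw [norm_of_nonneg (by positivity)]
    calc y ^ p * (1 + m * y ^ q) ^ (-c) ≤ y ^ p * (m * y ^ q) ^ (-c) := by
          gcongr y ^ p * ?_
          exact rpow_le_rpow_of_nonpos hmy (le_add_of_nonneg_left zero_le_one) (neg_nonpos.mpr hc)
      _ = m ^ (-c) * y ^ (p - q * c) := by
          rw [mul_rpow hm.le (by positivity), ← rpow_mul hy0.le, sub_eq_add_neg, rpow_add hy0,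
            ← mul_neg]
          ring
  rw [← Ioc_union_Ioi_eq_Ioi zero_le_one]
  exact h_Ioc.union h_Ioi

lemma integral_Ioi_rpow_mul_one_add_rpow_neg (a c : ℝ) {α t : ℝ} (hα : 0 < α) (ht : 0 < t) :
    ∫ y in Ioi (0 : ℝ), y ^ (a - 1) * (1 + t * y ^ α) ^ (-c) =
      t ^ (-(a / α)) * ((1 / α) * ∫ s in Ioi (0 : ℝ), s ^ (a / α - 1) / (1 + s) ^ c) := by
  set F : ℝ → ℝ := fun s => s ^ (a / α - 1) / (1 + s) ^ c
  -- substitute `u = y ^ α`, then `s = t u`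
  have h_rpow : ∫ y in Ioi (0 : ℝ), y ^ (a - 1) * (1 + t * y ^ α) ^ (-c) =
      (1 / α) * ∫ u in Ioi (0 : ℝ), u ^ (a / α - 1) * (1 + t * u) ^ (-c) := by
    rw [← integral_comp_rpow_Ioi (fun u => u ^ (a / α - 1) * (1 + t * u) ^ (-c)) hα.ne',
      ← integral_const_mul]
    refine setIntegral_congr_fun measurableSet_Ioi fun y (hy : 0 < y) => ?_
    rw [smul_eq_mul, abs_of_pos hα, ← rpow_mul hy.le, mul_sub, mul_div_cancel₀ _ hα.ne',
      mul_one]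
    field_simp
    rw [← rpow_add hy]
    ring_nf
  have h_scale : ∫ u in Ioi (0 : ℝ), u ^ (a / α - 1) * (1 + t * u) ^ (-c) =
      t ^ (-(a / α)) * ∫ s in Ioi (0 : ℝ), F s := by
    have h := integral_comp_mul_left_Ioi F 0 ht
    rw [mul_zero, smul_eq_mul] at h
    rw [show t ^ (-(a / α)) = t ^ (1 - a / α) * t⁻¹ by
        rw [rpow_sub ht, rpow_one, rpow_neg ht.le]; field_simp,
      mul_assoc, ← h, ← integral_const_mul]
    refine setIntegral_congr_fun measurableSet_Ioi fun u (hu : 0 < u) => ?_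
    simp only [F]
    rw [mul_rpow ht.le hu.le, rpow_neg (by positivity) c, rpow_sub ht, rpow_sub ht, rpow_one]
    field_simp
  rw [h_rpow, h_scale]
  ring

section

variable {X : Type*} [MeasurableSpace X] {μ : Measure X}

lemma lintegral_le_weighted_Lp_mul_Lq {p : ℝ} (hp : 1 < p) {f w : X → ℝ≥0∞}
    (hf : AEMeasurable f μ) (hw : AEMeasurable w μ) (hw0 : ∀ x, w x ≠ 0) (hwtop : ∀ x, w x ≠ ⊤) :
    ∫⁻ x, f x ∂μ ≤
      (∫⁻ x, f x ^ p * w x ∂μ) ^ (1 / p) * (∫⁻ x, w x ^ (-(1 / (p - 1))) ∂μ) ^ ((p - 1) / p) := by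
  have hp0 : 0 < p := by linarith
  have hpq : p.HolderConjugate (p / (p - 1)) := .conjExponent hp
  have h_split : ∀ x, f x = f x * w x ^ (1 / p) * w x ^ (-(1 / p)) := fun x => by
    rw [mul_assoc, ← ENNReal.rpow_add _ _ (hw0 x) (hwtop x), add_neg_cancel, ENNReal.rpow_zero,
      mul_one]
  have h_first : ∀ x, (f x * w x ^ (1 / p)) ^ p = f x ^ p * w x := fun x => by
    rw [ENNReal.mul_rpow_of_nonneg _ _ hp0.le, ← ENNReal.rpow_mul, one_div_mul_cancel hp0.ne',
      ENNReal.rpow_one]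
  have h_second : ∀ x, (w x ^ (-(1 / p))) ^ (p / (p - 1)) = w x ^ (-(1 / (p - 1))) := fun x => by
    rw [← ENNReal.rpow_mul]
    congr 1
    field_simp
  have := ENNReal.lintegral_mul_le_Lp_mul_Lq μ hpq (f := fun x => f x * w x ^ (1 / p))
    (g := fun x => w x ^ (-(1 / p))) (by fun_prop) (by fun_prop)
  simp only [Pi.mul_apply, h_first, h_second, ← h_split] at this
  rwa [one_div_div] at this

lemma lintegral_ofReal_eq_zero_of_lintegral_mul_rpow_eq_zero {g w : X → ℝ} {β : ℝ}
    (hg : Measurable g) (hw : Measurable w) (hw0 : ∀ᵐ x ∂μ, 0 < w x)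
    (h : ∫⁻ x, ENNReal.ofReal (w x * g x ^ β) ∂μ = 0) :
    ∫⁻ x, ENNReal.ofReal (g x) ∂μ = 0 := by
  rw [lintegral_eq_zero_iff (by fun_prop)] at h ⊢
  filter_upwards [h, hw0] with x hx hwx
  simp only [Pi.zero_apply, ENNReal.ofReal_eq_zero] at hx ⊢
  by_contra! hgx
  have := mul_pos hwx (rpow_pos_of_pos hgx β)
  linarith

end

section

variable {d α β K : ℝ}

lemma carlson_bound_at_optimum (hd : 0 < d) (hβ : 1 < β) (hα : d * (β - 1) < α) (hK : 0 < K)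
    {a b t : ℝ} (ha : 0 < a) (hb : 0 < b) (ht : t = d * (β - 1) * a / ((α - d * (β - 1)) * b)) :
    (a + t * b) ^ (1 / β) * (t ^ (-(d / α)) * K) ^ ((β - 1) / β) =
      (α / (d * (β - 1))) ^ (1 / β) *
        (d * (β - 1) / (α - d * (β - 1))) ^ ((α - d * (β - 1)) / (α * β)) * K ^ ((β - 1) / β) *
        a ^ ((α - d * (β - 1)) / (α * β)) * b ^ (d * (β - 1) / (α * β)) := by
  have hr : 0 < d * (β - 1) := mul_pos hd (by linarith)
  have hs : 0 < α - d * (β - 1) := by linarith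
  have hα0 : 0 < α := by linarith
  have ht0 : 0 < t := by rw [ht]; positivity
  have h_sum : a + t * b = a * α / (α - d * (β - 1)) := by
    rw [ht]; field_simp; ring
  rw [h_sum]
  simp (disch := positivity) only [rpow_def_of_pos, ← exp_add, exp_eq_exp]
  simp (disch := positivity) only [log_mul, log_div, log_exp, ht]
  field_simp
  ring

lemma le_carlson_bound_of_forall_pos (hd : 0 < d) (hβ : 1 < β) (hα : d * (β - 1) < α)
    {Y A B : ℝ≥0∞} (hA : A ≠ 0) (hB : B ≠ 0)
    (h : ∀ t : ℝ, 0 < t → Y ≤ (A + ENNReal.ofReal t * B) ^ (1 / β) *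
      ENNReal.ofReal (t ^ (-(d / α)) * K) ^ ((β - 1) / β)) :
    Y ≤ ENNReal.ofReal ((α / (d * (β - 1))) ^ (1 / β) *
        (d * (β - 1) / (α - d * (β - 1))) ^ ((α - d * (β - 1)) / (α * β)) * K ^ ((β - 1) / β)) *
      A ^ ((α - d * (β - 1)) / (α * β)) * B ^ (d * (β - 1) / (α * β)) := by
  have hr : 0 < d * (β - 1) := mul_pos hd (by linarith)
  have hα0 : 0 < α := by linarith
  have hs' : 0 < (α - d * (β - 1)) / (α * β) := by positivity
  have hr' : 0 < d * (β - 1) / (α * β) := by positivity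
  rcases le_or_gt K 0 with hK | hK
  · have := h 1 one_pos
    rw [one_rpow, one_mul, ENNReal.ofReal_of_nonpos hK, ENNReal.zero_rpow_of_pos (by positivity),
      mul_zero] at this
    exact this.trans zero_le
  have hC : ENNReal.ofReal ((α / (d * (β - 1))) ^ (1 / β) *
      (d * (β - 1) / (α - d * (β - 1))) ^ ((α - d * (β - 1)) / (α * β)) *
        K ^ ((β - 1) / β)) ≠ 0 := by
    rw [ne_eq, ENNReal.ofReal_eq_zero, not_le]; positivity
  rcases eq_top_or_lt_top A with hAt | hAt
  · rw [hAt, ENNReal.top_rpow_of_pos hs', ENNReal.mul_top hC,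
      ENNReal.top_mul (by simp [hB, hr'.le])]
    exact le_top
  rcases eq_top_or_lt_top B with hBt | hBt
  · rw [hBt, ENNReal.top_rpow_of_pos hr', ENNReal.mul_top (mul_ne_zero hC (by simp [hA, hs'.le]))]
    exact le_top
  obtain ⟨a, ha, rfl⟩ : ∃ a, 0 < a ∧ ENNReal.ofReal a = A :=
    ⟨A.toReal, ENNReal.toReal_pos hA hAt.ne, ENNReal.ofReal_toReal hAt.ne⟩
  obtain ⟨b, hb, rfl⟩ : ∃ b, 0 < b ∧ ENNReal.ofReal b = B :=
    ⟨B.toReal, ENNReal.toReal_pos hB hBt.ne, ENNReal.ofReal_toReal hBt.ne⟩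
  -- the minimizer of `t ↦ (a + t b) ^ (1 / β) * t ^ (-(d (β - 1) / (α β)))`
  set t := d * (β - 1) * a / ((α - d * (β - 1)) * b) with ht
  refine (h t (by positivity)).trans_eq ?_
  rw [← ENNReal.ofReal_mul (by positivity), ← ENNReal.ofReal_add ha.le (by positivity),
    ENNReal.ofReal_rpow_of_pos (by positivity), ENNReal.ofReal_rpow_of_pos (by positivity),
    ENNReal.ofReal_rpow_of_pos ha, ENNReal.ofReal_rpow_of_pos hb,
    ← ENNReal.ofReal_mul (by positivity), ← ENNReal.ofReal_mul (by positivity),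
    ← ENNReal.ofReal_mul (by positivity),
    carlson_bound_at_optimum hd hβ hα hK ha hb ht]

end

section

variable {E : Type*} [NormedAddCommGroup E] [InnerProductSpace ℝ E] [FiniteDimensional ℝ E]
  [MeasurableSpace E] [BorelSpace E] [Nontrivial E]

lemma finrank_mul_volumeReal_ball_zero_one :
    (finrank ℝ E : ℝ) * volume.real (ball (0 : E) 1) =
      2 * π ^ ((finrank ℝ E : ℝ) / 2) / Gamma (finrank ℝ E / 2) := by
  have hn : (0 : ℝ) < finrank ℝ E := by exact_mod_cast finrank_pos
  have hΓ := Gamma_pos_of_pos (half_pos hn)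
  rw [measureReal_def, InnerProductSpace.volume_ball, ENNReal.ofReal_one, one_pow, one_mul,
    ENNReal.toReal_ofReal (by positivity), Gamma_add_one (half_pos hn).ne', sqrt_eq_rpow,
    ← rpow_natCast, ← rpow_mul pi_pos.le]
  field_simp

lemma lintegral_one_add_mul_norm_rpow_rpow_neg {α t c : ℝ} (hα : 0 < α) (ht : 0 < t)
    (hc : finrank ℝ E < α * c) :
    ∫⁻ x : E, ENNReal.ofReal ((1 + t * ‖x‖ ^ α) ^ (-c)) =
      ENNReal.ofReal (t ^ (-(finrank ℝ E / α)) *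
        (2 * π ^ ((finrank ℝ E : ℝ) / 2) / Gamma (finrank ℝ E / 2) * (1 / α) *
          ∫ s in Ioi (0 : ℝ), s ^ ((finrank ℝ E : ℝ) / α - 1) / (1 + s) ^ c)) := by
  have hn : 1 ≤ finrank ℝ E := finrank_pos
  set f : ℝ → ℝ := fun y => (1 + t * y ^ α) ^ (-c)
  have h_pow : EqOn (fun y : ℝ => y ^ (finrank ℝ E - 1) • f y)
      (fun y => y ^ ((finrank ℝ E : ℝ) - 1) * f y) (Ioi 0) := fun y _ => by
    simp only [smul_eq_mul]
    rw [← rpow_natCast, Nat.cast_sub hn, Nat.cast_one]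
  have h_int : Integrable (fun x : E => f ‖x‖) := by
    rw [integrable_fun_norm_addHaar, integrableOn_congr_fun h_pow measurableSet_Ioi]
    have : (1 : ℝ) ≤ finrank ℝ E := by exact_mod_cast hn
    exact integrableOn_Ioi_rpow_mul_one_add_rpow_neg (by linarith) hα ht (by linarith)
  rw [← ofReal_integral_eq_lintegral_ofReal h_int (.of_forall fun x => by positivity),
    integral_fun_norm_addHaar, setIntegral_congr_fun measurableSet_Ioi h_pow,
    integral_Ioi_rpow_mul_one_add_rpow_neg _ _ hα ht, nsmul_eq_mul, smul_eq_mul, ← mul_assoc,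
    finrank_mul_volumeReal_ball_zero_one]
  congr 1
  ring

lemma lintegral_ofReal_le_weighted_bound {g : E → ℝ} (hg : Measurable g) (hg0 : ∀ x, 0 ≤ g x)
    {α β t : ℝ} (hβ : 1 < β) (hα : finrank ℝ E * (β - 1) < α) (ht : 0 < t) :
    ∫⁻ x, ENNReal.ofReal (g x) ≤
      ((∫⁻ x, ENNReal.ofReal (g x ^ β)) +
          ENNReal.ofReal t * ∫⁻ x, ENNReal.ofReal (‖x‖ ^ α * g x ^ β)) ^ (1 / β) *
        ENNReal.ofReal (t ^ (-(finrank ℝ E / α)) *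
          (2 * π ^ ((finrank ℝ E : ℝ) / 2) / Gamma (finrank ℝ E / 2) * (1 / α) *
            ∫ s in Ioi (0 : ℝ), s ^ ((finrank ℝ E : ℝ) / α - 1) / (1 + s) ^ (1 / (β - 1))))
          ^ ((β - 1) / β) := by
  have hβ1 : 0 < β - 1 := by linarith
  have hα0 : 0 < α := lt_of_le_of_lt (by positivity) hα
  have hw : ∀ x : E, 0 < 1 + t * ‖x‖ ^ α := fun x => by positivity
  have h_first : ∀ x : E, ENNReal.ofReal (g x) ^ β * ENNReal.ofReal (1 + t * ‖x‖ ^ α) =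
      ENNReal.ofReal (g x ^ β) + ENNReal.ofReal t * ENNReal.ofReal (‖x‖ ^ α * g x ^ β) := by
    intro x
    have hgβ := rpow_nonneg (hg0 x) β
    rw [ENNReal.ofReal_rpow_of_nonneg (hg0 x) (by linarith), ← ENNReal.ofReal_mul ht.le,
      ← ENNReal.ofReal_mul (by positivity), ← ENNReal.ofReal_add (by positivity) (by positivity)]
    congr 1
    ring
  have h_second : ∀ x : E, ENNReal.ofReal (1 + t * ‖x‖ ^ α) ^ (-(1 / (β - 1))) =
      ENNReal.ofReal ((1 + t * ‖x‖ ^ α) ^ (-(1 / (β - 1)))) := fun x =>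
    ENNReal.ofReal_rpow_of_pos (hw x)
  have h := lintegral_le_weighted_Lp_mul_Lq hβ (μ := volume) (f := fun x => ENNReal.ofReal (g x))
    (w := fun x : E => ENNReal.ofReal (1 + t * ‖x‖ ^ α)) (by fun_prop) (by fun_prop)
    (fun x => ENNReal.ofReal_ne_zero_iff.mpr (hw x)) (fun _ => ENNReal.ofReal_ne_top)
  simp only [h_first, h_second] at h
  rwa [lintegral_add_left (by fun_prop), lintegral_const_mul _ (by fun_prop),
    lintegral_one_add_mul_norm_rpow_rpow_neg hα0 ht (by rwa [mul_one_div, lt_div_iff₀ hβ1])] at h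

end

theorem stmt2 {d : ℕ} (hd : 1 ≤ d) (g : EuclideanSpace ℝ (Fin d) → ℝ)
    (hg : Measurable g) (hg0 : ∀ x, 0 ≤ g x) (α β : ℝ) (hβ : 1 < β)
    (hα : (d : ℝ) * (β - 1) < α) :
    ∫⁻ x, ENNReal.ofReal (g x) ≤
      ENNReal.ofReal
        ((α / (d * (β - 1))) ^ (1 / β) *
          (d * (β - 1) / (α - d * (β - 1))) ^ ((α - d * (β - 1)) / (α * β)) *
          ((2 * Real.pi ^ ((d : ℝ) / 2) / Real.Gamma (d / 2)) * (1 / α) *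
            ∫ s in Set.Ioi (0 : ℝ), s ^ ((d : ℝ) / α - 1) / (1 + s) ^ (1 / (β - 1))) ^
            ((β - 1) / β)) *
      (∫⁻ x, ENNReal.ofReal (g x ^ β)) ^ ((α - d * (β - 1)) / (α * β)) *
      (∫⁻ x, ENNReal.ofReal (‖x‖ ^ α * g x ^ β)) ^ (d * (β - 1) / (α * β)) := by
  have : Nontrivial (EuclideanSpace ℝ (Fin d)) :=
    have : Nonempty (Fin d) := ⟨⟨0, hd⟩⟩
    inferInstance
  have hfin : finrank ℝ (EuclideanSpace ℝ (Fin d)) = d := finrank_euclideanSpace_fin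
  by_cases hA : ∫⁻ x, ENNReal.ofReal (g x ^ β) = 0
  · rw [lintegral_ofReal_eq_zero_of_lintegral_mul_rpow_eq_zero hg measurable_const
      (.of_forall fun _ => one_pos) (by simpa using hA)]
    exact zero_le
  by_cases hB : ∫⁻ x, ENNReal.ofReal (‖x‖ ^ α * g x ^ β) = 0
  · rw [lintegral_ofReal_eq_zero_of_lintegral_mul_rpow_eq_zero hg (by fun_prop)
      ((Measure.ae_ne volume 0).mono fun x hx => rpow_pos_of_pos (norm_pos_iff.mpr hx) α) hB]
    exact zero_le
  refine le_carlson_bound_of_forall_pos (by positivity) hβ hα hA hB fun t ht => ?_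
  have := lintegral_ofReal_le_weighted_bound hg hg0 hβ (by rwa [hfin]) ht
  rwa [hfin] at this
end

section
/- Let μ, ν be probability measures on ℝ^d with densities f and g with respect to Lebesgue measure and finite p-th moments, p ≥ 1. Then W_p(μ, ν)^p ≤ 2^{p−1} ∫_{ℝ^d} |x|^p |f(x) − g(x)| dx. -/
/-! Keep the common mass `min f g` in place and couple the excess parts `(f - g)⁺` and `(g - f)⁺`,
which have the same mass `r`, independently (the product measure scaled by `r⁻¹`). The diagonal
part costs nothing, and the bound `‖x - y‖ ^ p ≤ 2 ^ (p - 1) (‖x‖ ^ p + ‖y‖ ^ p)` on the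
independent part integrates to `2 ^ (p - 1) ∫ ‖x‖ ^ p ((f - g)⁺ + (g - f)⁺) = 2 ^ (p - 1) ∫ ‖x‖ ^ p |f - g|`. -/

open MeasureTheory ProbabilityTheory Real Filter Set
open scoped ENNReal NNReal

lemma ENNReal.ofReal_norm_sub_rpow_le {E : Type*} [SeminormedAddCommGroup E] {p : ℝ}
    (hp : 1 ≤ p) (x y : E) :
    ENNReal.ofReal (‖x - y‖ ^ p) ≤
      2 ^ (p - 1) * (ENNReal.ofReal (‖x‖ ^ p) + ENNReal.ofReal (‖y‖ ^ p)) := by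
  have hp0 : 0 ≤ p := by linarith
  simp only [← ENNReal.ofReal_rpow_of_nonneg (norm_nonneg _) hp0]
  calc ENNReal.ofReal ‖x - y‖ ^ p
      ≤ (ENNReal.ofReal ‖x‖ + ENNReal.ofReal ‖y‖) ^ p := by
        rw [← ENNReal.ofReal_add (norm_nonneg _) (norm_nonneg _)]
        gcongr
        exact norm_sub_le x y
    _ ≤ 2 ^ (p - 1) * (ENNReal.ofReal ‖x‖ ^ p + ENNReal.ofReal ‖y‖ ^ p) :=
        ENNReal.rpow_add_le_mul_rpow_add_rpow _ _ hp

lemma ENNReal.ofReal_sub_add_ofReal_sub {a b : ℝ} (ha : 0 ≤ a) (hb : 0 ≤ b) :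
    ENNReal.ofReal a - ENNReal.ofReal b + (ENNReal.ofReal b - ENNReal.ofReal a) =
      ENNReal.ofReal |a - b| := by
  rw [← ENNReal.ofReal_sub _ hb, ← ENNReal.ofReal_sub _ ha]
  rcases le_total a b with h | h
  · rw [ENNReal.ofReal_of_nonpos (sub_nonpos.2 h), zero_add, abs_of_nonpos (sub_nonpos.2 h),
      neg_sub]
  · rw [ENNReal.ofReal_of_nonpos (sub_nonpos.2 h), add_zero, abs_of_nonneg (sub_nonneg.2 h)]

namespace MeasureTheory.Measure

variable {α : Type*} [MeasurableSpace α]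

lemma withDensity_inf_add_withDensity_tsub (μ : Measure α) {f g : α → ℝ≥0∞}
    (hf : Measurable f) (hg : Measurable g) :
    μ.withDensity (f ⊓ g) + μ.withDensity (f - g) = μ.withDensity f := by
  rw [← withDensity_add_left (hf.inf hg), add_comm]
  congr 1
  ext x
  exact tsub_add_min

lemma inv_measure_univ_smul_smul (μ : Measure α) [IsFiniteMeasure μ] :
    (μ univ)⁻¹ • μ univ • μ = μ := by
  rcases eq_zero_or_neZero μ with rfl | hμ
  · simp
  · rw [smul_smul, ENNReal.inv_mul_cancel (NeZero.ne _) (measure_ne_top μ univ), one_smul]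

noncomputable def overlapCoupling (σ μ ν : Measure α) : Measure (α × α) :=
  σ.map (fun x => (x, x)) + (μ univ)⁻¹ • μ.prod ν

variable (σ : Measure α) {μ ν : Measure α}

lemma map_fst_overlapCoupling [IsFiniteMeasure μ] [SFinite ν] (h : ν univ = μ univ) :
    (overlapCoupling σ μ ν).map Prod.fst = σ + μ := by
  rw [overlapCoupling, Measure.map_add _ _ measurable_fst, Measure.map_smul, map_fst_prod, h,
    inv_measure_univ_smul_smul, map_map measurable_fst (by fun_prop)]
  simp only [Function.comp_def, Measure.map_id']

lemma map_snd_overlapCoupling [IsFiniteMeasure ν] (h : ν univ = μ univ) :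
    (overlapCoupling σ μ ν).map Prod.snd = σ + ν := by
  rw [overlapCoupling, Measure.map_add _ _ measurable_snd, Measure.map_smul, map_snd_prod, ← h,
    inv_measure_univ_smul_smul, map_map measurable_snd (by fun_prop)]
  simp only [Function.comp_def, Measure.map_id']

lemma lintegral_norm_sub_rpow_overlapCoupling_le {E : Type*} [SeminormedAddCommGroup E]
    [MeasurableSpace E] [OpensMeasurableSpace E] {p : ℝ} (hp : 1 ≤ p)
    (σ μ ν : Measure E) [SFinite ν] (h : ν univ = μ univ) :
    ∫⁻ z, ENNReal.ofReal (‖z.1 - z.2‖ ^ p) ∂(overlapCoupling σ μ ν) ≤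
      2 ^ (p - 1) * (∫⁻ x, ENNReal.ofReal (‖x‖ ^ p) ∂μ + ∫⁻ x, ENNReal.ofReal (‖x‖ ^ p) ∂ν) := by
  set a : E → ℝ≥0∞ := fun x => ENNReal.ofReal (‖x‖ ^ p)
  have ha : Measurable a := by fun_prop
  have hdiag : ∫⁻ z, ENNReal.ofReal (‖z.1 - z.2‖ ^ p) ∂(σ.map fun x => (x, x)) = 0 := by
    refine le_antisymm ((lintegral_map_le _ _).trans_eq ?_) zero_le
    simp [Real.zero_rpow (by linarith : p ≠ 0)]
  have hprod : ∫⁻ z, ENNReal.ofReal (‖z.1 - z.2‖ ^ p) ∂(μ.prod ν) ≤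
      2 ^ (p - 1) * (μ univ * (∫⁻ x, a x ∂μ + ∫⁻ x, a x ∂ν)) := calc
    _ ≤ ∫⁻ z, 2 ^ (p - 1) * (a z.1 + a z.2) ∂(μ.prod ν) :=
        lintegral_mono fun z => ENNReal.ofReal_norm_sub_rpow_le hp z.1 z.2
    _ = 2 ^ (p - 1) * (∫⁻ z, a z.1 ∂(μ.prod ν) + ∫⁻ z, a z.2 ∂(μ.prod ν)) := by
        rw [lintegral_const_mul _ (by fun_prop), lintegral_add_left (by fun_prop)]
    _ = 2 ^ (p - 1) * (μ univ * (∫⁻ x, a x ∂μ + ∫⁻ x, a x ∂ν)) := by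
        rw [← lintegral_map ha measurable_fst, ← lintegral_map ha measurable_snd, map_fst_prod,
          map_snd_prod, lintegral_smul_measure, lintegral_smul_measure, h, smul_eq_mul,
          smul_eq_mul]
        ring
  calc _ = (μ univ)⁻¹ * ∫⁻ z, ENNReal.ofReal (‖z.1 - z.2‖ ^ p) ∂(μ.prod ν) := by
        rw [overlapCoupling, lintegral_add_measure, lintegral_smul_measure, hdiag, zero_add,
          smul_eq_mul]
    _ ≤ (μ univ)⁻¹ * (2 ^ (p - 1) * (μ univ * (∫⁻ x, a x ∂μ + ∫⁻ x, a x ∂ν))) := by gcongr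
    _ = ((μ univ)⁻¹ * μ univ) * (2 ^ (p - 1) * (∫⁻ x, a x ∂μ + ∫⁻ x, a x ∂ν)) := by ring
    _ ≤ 2 ^ (p - 1) * (∫⁻ x, a x ∂μ + ∫⁻ x, a x ∂ν) :=
        mul_le_of_le_one_left zero_le (ENNReal.inv_mul_le_one _)

end MeasureTheory.Measure

open Measure in
theorem exists_coupling_lintegral_norm_sub_rpow_le {E : Type*} [SeminormedAddCommGroup E]
    [MeasurableSpace E] [OpensMeasurableSpace E] (ρ : Measure E) {f g : E → ℝ≥0∞}
    (hf : Measurable f) (hg : Measurable g) {μ ν : Measure E} [IsProbabilityMeasure μ]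
    [IsProbabilityMeasure ν] (hμ : μ = ρ.withDensity f) (hν : ν = ρ.withDensity g) {p : ℝ}
    (hp : 1 ≤ p) :
    ∃ γ : Measure (E × E), IsProbabilityMeasure γ ∧ γ.map Prod.fst = μ ∧ γ.map Prod.snd = ν ∧
      ∫⁻ z, ENNReal.ofReal (‖z.1 - z.2‖ ^ p) ∂γ ≤
        2 ^ (p - 1) * ∫⁻ x, ENNReal.ofReal (‖x‖ ^ p) * (f x - g x + (g x - f x)) ∂ρ := by
  set σ := ρ.withDensity (f ⊓ g)
  set μ₁ := ρ.withDensity (f - g)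
  set ν₁ := ρ.withDensity (g - f)
  have hμ₁ : σ + μ₁ = μ := hμ ▸ withDensity_inf_add_withDensity_tsub ρ hf hg
  have hν₁ : σ + ν₁ = ν := by
    rw [hν, ← withDensity_inf_add_withDensity_tsub ρ hg hf, inf_comm]
  have : IsFiniteMeasure σ := isFiniteMeasure_of_le μ (hμ₁ ▸ Measure.le_add_right le_rfl)
  have : IsFiniteMeasure μ₁ := isFiniteMeasure_of_le μ (hμ₁ ▸ Measure.le_add_left le_rfl)
  have : IsFiniteMeasure ν₁ := isFiniteMeasure_of_le ν (hν₁ ▸ Measure.le_add_left le_rfl)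
  have hmass : ν₁ univ = μ₁ univ := by
    have : σ univ + ν₁ univ = σ univ + μ₁ univ := by
      rw [← Measure.add_apply, ← Measure.add_apply, hμ₁, hν₁, measure_univ, measure_univ]
    exact (ENNReal.add_right_inj (measure_ne_top σ univ)).1 this
  have hfst := map_fst_overlapCoupling σ hmass
  refine ⟨overlapCoupling σ μ₁ ν₁, ⟨?_⟩, hfst.trans hμ₁,
    (map_snd_overlapCoupling σ hmass).trans hν₁, ?_⟩
  · rw [← measure_univ (μ := μ), ← hμ₁, ← hfst, map_apply measurable_fst .univ, preimage_univ]
  · refine (lintegral_norm_sub_rpow_overlapCoupling_le hp σ μ₁ ν₁ hmass).trans_eq ?_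
    rw [lintegral_withDensity_eq_lintegral_mul _ (hf.sub hg) (by fun_prop),
      lintegral_withDensity_eq_lintegral_mul _ (hg.sub hf) (by fun_prop),
      ← lintegral_add_left (by fun_prop)]
    congr 1
    exact lintegral_congr fun x => by simp only [Pi.mul_apply, Pi.sub_apply]; ring

lemma WpPow_nonneg {d : ℕ} (p : ℝ) (μ ν : Measure (EuclideanSpace ℝ (Fin d))) :
    0 ≤ WpPow p μ ν :=
  Real.sInf_nonneg fun _ ⟨_, _, _, _, hc⟩ => hc ▸ integral_nonneg fun _ => by positivity

lemma Wp_rpow {d : ℕ} {p : ℝ} (hp : p ≠ 0) (μ ν : Measure (EuclideanSpace ℝ (Fin d))) :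
    Wp p μ ν ^ p = WpPow p μ ν := by
  rw [Wp, ← Real.rpow_mul (WpPow_nonneg p μ ν), one_div_mul_cancel hp, Real.rpow_one]

lemma WpPow_le_toReal_lintegral {d : ℕ} {p : ℝ} {μ ν : Measure (EuclideanSpace ℝ (Fin d))}
    (γ : Measure (EuclideanSpace ℝ (Fin d) × EuclideanSpace ℝ (Fin d))) [IsProbabilityMeasure γ]
    (hγ₁ : γ.map Prod.fst = μ) (hγ₂ : γ.map Prod.snd = ν) :
    WpPow p μ ν ≤ (∫⁻ z, ENNReal.ofReal (‖z.1 - z.2‖ ^ p) ∂γ).toReal := by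
  rw [← integral_eq_lintegral_of_nonneg_ae (.of_forall fun _ => by positivity)
    (Measurable.aestronglyMeasurable (by fun_prop))]
  refine csInf_le ⟨0, ?_⟩ ⟨γ, inferInstance, hγ₁, hγ₂, rfl⟩
  rintro _ ⟨_, _, _, _, rfl⟩
  exact integral_nonneg fun _ => by positivity

lemma lintegral_mul_tsub_add_tsub_le {α : Type*} [MeasurableSpace α] (ρ : Measure α)
    {f g a : α → ℝ≥0∞} (hf : Measurable f) (hg : Measurable g) (ha : Measurable a) :
    ∫⁻ x, a x * (f x - g x + (g x - f x)) ∂ρ ≤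
      ∫⁻ x, a x ∂(ρ.withDensity f) + ∫⁻ x, a x ∂(ρ.withDensity g) := calc
  _ ≤ ∫⁻ x, f x * a x + g x * a x ∂ρ :=
      lintegral_mono fun x => by
        rw [← add_mul, mul_comm]
        gcongr <;> exact tsub_le_self
  _ = _ := by
      rw [lintegral_add_left (by fun_prop), lintegral_withDensity_eq_lintegral_mul _ hf ha,
        lintegral_withDensity_eq_lintegral_mul _ hg ha]
      rfl

theorem stmt5_general {d : ℕ} (p : ℝ) (hp : 1 ≤ p)
    (f g : EuclideanSpace ℝ (Fin d) → ℝ) (hf : Measurable f) (hg : Measurable g)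
    (hf0 : ∀ x, 0 ≤ f x) (hg0 : ∀ x, 0 ≤ g x)
    (μ ν : Measure (EuclideanSpace ℝ (Fin d)))
    (hμ : μ = volume.withDensity (fun x => ENNReal.ofReal (f x)))
    (hν : ν = volume.withDensity (fun x => ENNReal.ofReal (g x)))
    [IsProbabilityMeasure μ] [IsProbabilityMeasure ν]
    (hμp : ∫⁻ x, ENNReal.ofReal (‖x‖ ^ p) ∂μ < ⊤)
    (hνp : ∫⁻ x, ENNReal.ofReal (‖x‖ ^ p) ∂ν < ⊤) :
    (Wp p μ ν) ^ p ≤ 2 ^ (p - 1) * ∫ x, ‖x‖ ^ p * |f x - g x| := by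
  obtain ⟨γ, _, hγ₁, hγ₂, hcost⟩ := exists_coupling_lintegral_norm_sub_rpow_le volume
    hf.ennreal_ofReal hg.ennreal_ofReal hμ hν hp
  have hfinite := (lintegral_mul_tsub_add_tsub_le volume hf.ennreal_ofReal hg.ennreal_ofReal
    (a := fun x => ENNReal.ofReal (‖x‖ ^ p)) (by fun_prop)).trans_lt
    (hμ ▸ hν ▸ ENNReal.add_lt_top.2 ⟨hμp, hνp⟩)
  have hdensity (x : EuclideanSpace ℝ (Fin d)) :
      ENNReal.ofReal (‖x‖ ^ p) * (ENNReal.ofReal (f x) - ENNReal.ofReal (g x) +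
        (ENNReal.ofReal (g x) - ENNReal.ofReal (f x))) =
      ENNReal.ofReal (‖x‖ ^ p * |f x - g x|) := by
    rw [ENNReal.ofReal_sub_add_ofReal_sub (hf0 x) (hg0 x), ENNReal.ofReal_mul (by positivity)]
  simp only [hdensity] at hcost hfinite
  rw [Wp_rpow (by linarith), integral_eq_lintegral_of_nonneg_ae
    (.of_forall fun _ => by positivity) (by fun_prop)]
  calc WpPow p μ ν ≤ _ := WpPow_le_toReal_lintegral γ hγ₁ hγ₂
    _ ≤ _ := ENNReal.toReal_mono (ENNReal.mul_ne_top (by simp) hfinite.ne) hcost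
    _ = _ := by rw [ENNReal.toReal_mul, ← ENNReal.toReal_rpow]; norm_num

theorem stmt5 {d : ℕ} (hd : 1 ≤ d) (p : ℝ) (hp : 1 ≤ p)
    (f g : EuclideanSpace ℝ (Fin d) → ℝ) (hf : Measurable f) (hg : Measurable g)
    (hf0 : ∀ x, 0 ≤ f x) (hg0 : ∀ x, 0 ≤ g x)
    (μ ν : Measure (EuclideanSpace ℝ (Fin d)))
    (hμ : μ = volume.withDensity (fun x => ENNReal.ofReal (f x)))
    (hν : ν = volume.withDensity (fun x => ENNReal.ofReal (g x)))
    [IsProbabilityMeasure μ] [IsProbabilityMeasure ν]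
    (hμp : ∫⁻ x, ENNReal.ofReal (‖x‖ ^ p) ∂μ < ⊤)
    (hνp : ∫⁻ x, ENNReal.ofReal (‖x‖ ^ p) ∂ν < ⊤) :
    (Wp p μ ν) ^ p ≤ 2 ^ (p - 1) * ∫ x, ‖x‖ ^ p * |f x - g x| :=
  stmt5_general p hp f g hf hg hf0 hg0 μ ν hμ hν hμp hνp
end

section
/- There exist constants v₀ > 0 and c₀ > 0 such that for every n ∈ ℕ and every p ∈ (0,1) with np(1−p) ≥ v₀, if X ∼ Binomial(n, p), then P(X − np ≥ (1/2)√(np(1−p))) ≥ c₀. -/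
/-!
Write `Y = X - np` and `σ = √(np(1-p))`. The factorial moments
`E[X(X-1)⋯(X-j+1)] = n(n-1)⋯(n-j+1) pʲ` give `E Y = 0`, `E Y² = σ²`, `E Y³ = σ²(1-2p)` and
`E Y⁴ = 3σ⁴ + σ²(1-6p(1-p))`. On the event `A = {Y ≥ σ/2}` put `Z = Y + 2σ`. Pointwise
`(Y - σ/2)(Y + 2σ)² ≤ Z³ 1_A`, so `E[Z³ 1_A] ≥ E Y³ + 3σ³/2 ≥ σ³` as soon as `σ ≥ 2`, while
`E[Z⁴ 1_A] ≤ E (Y + 2σ)⁴ ≤ 48σ⁴`. Hölder's inequality `E[Z³ 1_A]⁴ ≤ P(A) E[Z⁴ 1_A]³` then gives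
`P(A) ≥ 48⁻³`, so `v₀ = 4` and `c₀ = 1/110592` work.
-/

open Finset

theorem Nat.choose_mul_descFactorial {n k j : ℕ} (hjk : j ≤ k) :
    n.choose k * k.descFactorial j = n.descFactorial j * (n - j).choose (k - j) := by
  rw [Nat.descFactorial_eq_factorial_mul_choose, Nat.descFactorial_eq_factorial_mul_choose,
    mul_left_comm, Nat.choose_mul hjk, mul_assoc]

theorem sum_range_choose_mul_descFactorial_mul_pow {R : Type*} [CommSemiring R] (x y : R)
    (n j : ℕ) :
    ∑ k ∈ range (n + 1), (n.choose k * k.descFactorial j : R) * x ^ k * y ^ (n - k) =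
      n.descFactorial j * x ^ j * (x + y) ^ (n - j) := by
  have term_eq_zero {k : ℕ} (hkj : k < j) :
      (n.choose k * k.descFactorial j : R) * x ^ k * y ^ (n - k) = 0 := by
    simp [Nat.descFactorial_eq_zero_iff_lt.2 hkj]
  rcases le_or_gt j n with hjn | hnj
  · obtain ⟨m, rfl⟩ := Nat.exists_eq_add_of_le hjn
    rw [add_assoc, sum_range_add, sum_eq_zero fun k hk => term_eq_zero (mem_range.1 hk),
      zero_add, Nat.add_sub_cancel_left, add_pow, mul_sum]
    refine sum_congr rfl fun i _ => ?_
    rw [← Nat.cast_mul, Nat.choose_mul_descFactorial (Nat.le_add_right j i),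
      Nat.add_sub_add_left, pow_add, Nat.cast_mul]
    simp only [Nat.add_sub_cancel_left]
    ring
  · rw [sum_eq_zero fun k hk => term_eq_zero (by simp at hk; omega),
      Nat.descFactorial_eq_zero_iff_lt.2 hnj]
    simp

theorem Nat.cast_descFactorial_succ {R : Type*} [Ring R] (n k : ℕ) :
    (n.descFactorial (k + 1) : R) = n.descFactorial k * (n - k) := by
  rw [← descPochhammer_eval_eq_descFactorial, descPochhammer_succ_eval,
    descPochhammer_eval_eq_descFactorial]

theorem choose_mul_pow_mul_one_sub_pow_nonneg {p : ℝ} (hp0 : 0 ≤ p) (hp1 : p ≤ 1) (n k : ℕ) :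
    0 ≤ (n.choose k * p ^ k * (1 - p) ^ (n - k) : ℝ) := by
  have : 0 ≤ 1 - p := by linarith
  positivity

section BinomialMoments

variable (n : ℕ) (p : ℝ)

theorem sum_range_binomial_mul_descFactorial (j : ℕ) :
    ∑ k ∈ range (n + 1), n.choose k * p ^ k * (1 - p) ^ (n - k) * k.descFactorial j =
      n.descFactorial j * p ^ j := by
  convert sum_range_choose_mul_descFactorial_mul_pow p (1 - p) n j using 1
  · exact sum_congr rfl fun k _ => by ring
  · simp

theorem sum_range_binomial_mul_eq_of_eq_sum_descFactorial {m : ℕ} (a : Fin m → ℝ) {f : ℕ → ℝ}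
    (hf : ∀ k, f k = ∑ j, a j * k.descFactorial j) :
    ∑ k ∈ range (n + 1), n.choose k * p ^ k * (1 - p) ^ (n - k) * f k =
      ∑ j, a j * n.descFactorial j * p ^ (j : ℕ) := by
  simp_rw [hf, mul_sum]
  rw [sum_comm]
  refine sum_congr rfl fun j _ => ?_
  rw [mul_assoc, ← sum_range_binomial_mul_descFactorial, mul_sum]
  exact sum_congr rfl fun k _ => by ring

theorem sum_range_binomial :
    ∑ k ∈ range (n + 1), n.choose k * p ^ k * (1 - p) ^ (n - k) = 1 := by
  simpa using sum_range_binomial_mul_descFactorial n p 0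

/- The vectors `![…]` below list the coefficients of `(k - np)ᵐ` in the falling-factorial basis
`k.descFactorial j`, `j = 0, …, m`. -/
theorem sum_range_binomial_mul_sub_mean :
    ∑ k ∈ range (n + 1), n.choose k * p ^ k * (1 - p) ^ (n - k) * (k - n * p) = 0 := by
  rw [sum_range_binomial_mul_eq_of_eq_sum_descFactorial n p ![-(n * p), 1]
    fun k => by simp; ring]
  simp [Fin.sum_univ_succ]

theorem sum_range_binomial_mul_sub_mean_sq :
    ∑ k ∈ range (n + 1), n.choose k * p ^ k * (1 - p) ^ (n - k) * (k - n * p) ^ 2 =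
      n * p * (1 - p) := by
  rw [sum_range_binomial_mul_eq_of_eq_sum_descFactorial n p ![(n * p) ^ 2, 1 - 2 * (n * p), 1]
    fun k => by
      simp [Fin.sum_univ_succ, Nat.cast_descFactorial_succ, -Nat.descFactorial_succ]
      ring]
  simp [Fin.sum_univ_succ, Nat.cast_descFactorial_succ, -Nat.descFactorial_succ]
  ring

theorem sum_range_binomial_mul_sub_mean_pow_three :
    ∑ k ∈ range (n + 1), n.choose k * p ^ k * (1 - p) ^ (n - k) * (k - n * p) ^ 3 =
      n * p * (1 - p) * (1 - 2 * p) := by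
  rw [sum_range_binomial_mul_eq_of_eq_sum_descFactorial n p
    ![-(n * p) ^ 3, 1 - 3 * (n * p) + 3 * (n * p) ^ 2, 3 - 3 * (n * p), 1]
    fun k => by
      simp [Fin.sum_univ_succ, Nat.cast_descFactorial_succ, -Nat.descFactorial_succ]
      ring]
  simp [Fin.sum_univ_succ, Nat.cast_descFactorial_succ, -Nat.descFactorial_succ]
  ring

theorem sum_range_binomial_mul_sub_mean_pow_four :
    ∑ k ∈ range (n + 1), n.choose k * p ^ k * (1 - p) ^ (n - k) * (k - n * p) ^ 4 =
      3 * (n * p * (1 - p)) ^ 2 + n * p * (1 - p) * (1 - 6 * p * (1 - p)) := by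
  rw [sum_range_binomial_mul_eq_of_eq_sum_descFactorial n p
    ![(n * p) ^ 4, 1 - 4 * (n * p) + 6 * (n * p) ^ 2 - 4 * (n * p) ^ 3,
      7 - 12 * (n * p) + 6 * (n * p) ^ 2, 6 - 4 * (n * p), 1]
    fun k => by
      simp [Fin.sum_univ_succ, Nat.cast_descFactorial_succ, -Nat.descFactorial_succ]
      ring]
  simp [Fin.sum_univ_succ, Nat.cast_descFactorial_succ, -Nat.descFactorial_succ]
  ring

end BinomialMoments

section WeightedMoments

variable {ι : Type*} (s : Finset ι) {w : ι → ℝ}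

theorem sum_mul_pow_three_pow_four_le (hw : ∀ i ∈ s, 0 ≤ w i) (h : ι → ℝ) :
    (∑ i ∈ s, w i * h i ^ 3) ^ 4 ≤ (∑ i ∈ s, w i) * (∑ i ∈ s, w i * h i ^ 4) ^ 3 := by
  have hw2 : ∀ i ∈ s, 0 ≤ w i * h i ^ 2 := fun i hi => mul_nonneg (hw i hi) (by positivity)
  have hw4 : ∀ i ∈ s, 0 ≤ w i * h i ^ 4 := fun i hi => mul_nonneg (hw i hi) (by positivity)
  have cs3 : (∑ i ∈ s, w i * h i ^ 3) ^ 2 ≤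
      (∑ i ∈ s, w i * h i ^ 2) * ∑ i ∈ s, w i * h i ^ 4 :=
    sum_sq_le_sum_mul_sum_of_sq_le_mul s hw2 hw4 fun i _ => le_of_eq (by ring)
  have cs2 : (∑ i ∈ s, w i * h i ^ 2) ^ 2 ≤ (∑ i ∈ s, w i) * ∑ i ∈ s, w i * h i ^ 4 :=
    sum_sq_le_sum_mul_sum_of_sq_le_mul s hw hw4 fun i _ => le_of_eq (by ring)
  have hm4 : 0 ≤ ∑ i ∈ s, w i * h i ^ 4 := sum_nonneg hw4
  calc (∑ i ∈ s, w i * h i ^ 3) ^ 4 = ((∑ i ∈ s, w i * h i ^ 3) ^ 2) ^ 2 := by ring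
    _ ≤ ((∑ i ∈ s, w i * h i ^ 2) * ∑ i ∈ s, w i * h i ^ 4) ^ 2 :=
        pow_le_pow_left₀ (sq_nonneg _) cs3 2
    _ = (∑ i ∈ s, w i * h i ^ 2) ^ 2 * (∑ i ∈ s, w i * h i ^ 4) ^ 2 := by ring
    _ ≤ ((∑ i ∈ s, w i) * ∑ i ∈ s, w i * h i ^ 4) * (∑ i ∈ s, w i * h i ^ 4) ^ 2 := by gcongr
    _ = (∑ i ∈ s, w i) * (∑ i ∈ s, w i * h i ^ 4) ^ 3 := by ring

variable {Y : ι → ℝ} {σ : ℝ}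

theorem pow_three_le_sum_filter_mul_add_pow_three (hw : ∀ i ∈ s, 0 ≤ w i) (hσ : 2 ≤ σ)
    (h0 : ∑ i ∈ s, w i = 1) (h1 : ∑ i ∈ s, w i * Y i = 0)
    (h2 : ∑ i ∈ s, w i * Y i ^ 2 = σ ^ 2) (h3 : -σ ^ 2 ≤ ∑ i ∈ s, w i * Y i ^ 3) :
    σ ^ 3 ≤ ∑ i ∈ s with 1 / 2 * σ ≤ Y i, w i * (Y i + 2 * σ) ^ 3 := by
  have hexpand : ∑ i ∈ s, w i * ((Y i - 1 / 2 * σ) * (Y i + 2 * σ) ^ 2) =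
      ∑ i ∈ s, w i * Y i ^ 3 + 7 / 2 * σ * ∑ i ∈ s, w i * Y i ^ 2 +
        2 * σ ^ 2 * ∑ i ∈ s, w i * Y i - 2 * σ ^ 3 * ∑ i ∈ s, w i := by
    simp only [mul_sum, ← sum_add_distrib, ← sum_sub_distrib]
    exact sum_congr rfl fun i _ => by ring
  have hpointwise : ∀ i ∈ s, w i * ((Y i - 1 / 2 * σ) * (Y i + 2 * σ) ^ 2) ≤
      if 1 / 2 * σ ≤ Y i then w i * (Y i + 2 * σ) ^ 3 else 0 := fun i hi => by
    split_ifs <;> nlinarith [mul_nonneg (hw i hi) (sq_nonneg (Y i + 2 * σ))]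
  rw [h0, h1, h2] at hexpand
  rw [sum_filter]
  refine le_trans ?_ (sum_le_sum hpointwise)
  nlinarith

theorem sum_filter_mul_add_pow_four_le (hw : ∀ i ∈ s, 0 ≤ w i) (hσ : 2 ≤ σ)
    (h0 : ∑ i ∈ s, w i = 1) (h1 : ∑ i ∈ s, w i * Y i = 0)
    (h2 : ∑ i ∈ s, w i * Y i ^ 2 = σ ^ 2) (h3 : ∑ i ∈ s, w i * Y i ^ 3 ≤ σ ^ 2)
    (h4 : ∑ i ∈ s, w i * Y i ^ 4 ≤ 3 * σ ^ 4 + σ ^ 2) :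
    ∑ i ∈ s with 1 / 2 * σ ≤ Y i, w i * (Y i + 2 * σ) ^ 4 ≤ 48 * σ ^ 4 := by
  have hexpand : ∑ i ∈ s, w i * (Y i + 2 * σ) ^ 4 =
      ∑ i ∈ s, w i * Y i ^ 4 + 8 * σ * ∑ i ∈ s, w i * Y i ^ 3 +
        24 * σ ^ 2 * ∑ i ∈ s, w i * Y i ^ 2 + 32 * σ ^ 3 * ∑ i ∈ s, w i * Y i +
        16 * σ ^ 4 * ∑ i ∈ s, w i := by
    simp only [mul_sum, ← sum_add_distrib]
    exact sum_congr rfl fun i _ => by ring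
  have hfilter : ∑ i ∈ s with 1 / 2 * σ ≤ Y i, w i * (Y i + 2 * σ) ^ 4 ≤
      ∑ i ∈ s, w i * (Y i + 2 * σ) ^ 4 :=
    sum_le_sum_of_subset_of_nonneg (filter_subset _ s) fun i hi _ =>
      mul_nonneg (hw i hi) (by positivity)
  rw [h0, h1, h2] at hexpand
  nlinarith [pow_le_pow_left₀ (by norm_num) hσ 2, pow_le_pow_left₀ (by norm_num) hσ 3]

theorem le_sum_filter_of_central_moments (hw : ∀ i ∈ s, 0 ≤ w i) (hσ : 2 ≤ σ)
    (h0 : ∑ i ∈ s, w i = 1) (h1 : ∑ i ∈ s, w i * Y i = 0)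
    (h2 : ∑ i ∈ s, w i * Y i ^ 2 = σ ^ 2) (h3 : |∑ i ∈ s, w i * Y i ^ 3| ≤ σ ^ 2)
    (h4 : ∑ i ∈ s, w i * Y i ^ 4 ≤ 3 * σ ^ 4 + σ ^ 2) :
    1 / 110592 ≤ ∑ i ∈ s with 1 / 2 * σ ≤ Y i, w i := by
  set t := s.filter (1 / 2 * σ ≤ Y ·)
  have hwt : ∀ i ∈ t, 0 ≤ w i := fun i hi => hw i (mem_filter.1 hi).1
  have hm3 := pow_three_le_sum_filter_mul_add_pow_three s hw hσ h0 h1 h2 (abs_le.1 h3).1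
  have hm4 := sum_filter_mul_add_pow_four_le s hw hσ h0 h1 h2 (abs_le.1 h3).2 h4
  have key : σ ^ 12 ≤ (∑ i ∈ t, w i) * (48 * σ ^ 4) ^ 3 :=
    calc σ ^ 12 = (σ ^ 3) ^ 4 := by ring
      _ ≤ (∑ i ∈ t, w i * (Y i + 2 * σ) ^ 3) ^ 4 := pow_le_pow_left₀ (by positivity) hm3 4
      _ ≤ (∑ i ∈ t, w i) * (∑ i ∈ t, w i * (Y i + 2 * σ) ^ 4) ^ 3 :=
        sum_mul_pow_three_pow_four_le t hwt _
      _ ≤ (∑ i ∈ t, w i) * (48 * σ ^ 4) ^ 3 := by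
        gcongr
        · exact sum_nonneg hwt
        · exact sum_nonneg fun i hi => mul_nonneg (hwt i hi) (by positivity)
  rw [show (48 * σ ^ 4) ^ 3 = 110592 * σ ^ 12 by ring] at key
  nlinarith [pow_pos (by linarith : (0 : ℝ) < σ) 12]

end WeightedMoments

set_option linter.deprecated false in
theorem PMF.binomial_toNNReal_apply {p : ℝ} (hp : 0 ≤ p) (h : p.toNNReal ≤ 1) {n : ℕ}
    (i : Fin (n + 1)) :
    PMF.binomial p.toNNReal h n i =
      ENNReal.ofReal (n.choose i * p ^ (i : ℕ) * (1 - p) ^ (n - i)) := by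
  have happly := PMF.binomial_apply_of_le i.is_le h
  rw [Real.coe_toNNReal p hp] at happly
  simpa using happly.symm

set_option linter.deprecated false in
theorem PMF.binomial_toMeasure_setOf {p : ℝ} (hp : 0 ≤ p) (h : p.toNNReal ≤ 1) (n : ℕ)
    (P : ℕ → Prop) [DecidablePred P] :
    (PMF.binomial p.toNNReal h n).toMeasure {k | P k} =
      ENNReal.ofReal (∑ k ∈ range (n + 1) with P k, n.choose k * p ^ k * (1 - p) ^ (n - k)) := by
  have hnonneg : ∀ k ∈ range (n + 1),
      0 ≤ if P k then (n.choose k * p ^ k * (1 - p) ^ (n - k) : ℝ) else 0 := fun k _ => by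
    split_ifs
    exacts [choose_mul_pow_mul_one_sub_pow_nonneg hp (Real.toNNReal_le_one.1 h) n k, le_rfl]
  rw [PMF.toMeasure_apply_fintype, sum_filter, ENNReal.ofReal_sum_of_nonneg hnonneg,
    ← Fin.sum_univ_eq_sum_range (fun k => ENNReal.ofReal (if P k then _ else 0))]
  refine sum_congr rfl fun i _ => ?_
  split_ifs with hi
  · rw [Set.indicator_of_mem (by exact hi), PMF.binomial_toNNReal_apply hp]
  · rw [Set.indicator_of_notMem (by exact hi), ENNReal.ofReal_zero]

theorem le_sum_binomial_upper_tail {n : ℕ} {p : ℝ} (hp0 : 0 ≤ p) (hp1 : p ≤ 1)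
    (hv : 4 ≤ n * p * (1 - p)) :
    1 / 110592 ≤ ∑ k ∈ range (n + 1) with 1 / 2 * √(n * p * (1 - p)) ≤ ((k : ℕ) : ℝ) - n * p,
      n.choose k * p ^ k * (1 - p) ^ (n - k) := by
  set v := (n : ℝ) * p * (1 - p)
  have hσ : 2 ≤ √v := Real.le_sqrt_of_sq_le (by linarith)
  have hσ2 : √v ^ 2 = v := Real.sq_sqrt (by linarith)
  refine le_sum_filter_of_central_moments (range (n + 1))
    (fun k _ => choose_mul_pow_mul_one_sub_pow_nonneg hp0 hp1 n k) hσ (sum_range_binomial n p)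
    (sum_range_binomial_mul_sub_mean n p) ?_ ?_ ?_
  · rw [sum_range_binomial_mul_sub_mean_sq, hσ2]
  · rw [sum_range_binomial_mul_sub_mean_pow_three, hσ2, abs_le]
    constructor <;> nlinarith
  · rw [sum_range_binomial_mul_sub_mean_pow_four, show √v ^ 4 = (√v ^ 2) ^ 2 by ring, hσ2]
    nlinarith

open MeasureTheory ProbabilityTheory Real

theorem stmt8 :
    ∃ v₀ > (0 : ℝ), ∃ c₀ > (0 : ℝ),
      ∀ (n : ℕ) (p : ℝ) (hp0 : 0 < p) (hp1 : p < 1),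
        v₀ ≤ n * p * (1 - p) →
        ENNReal.ofReal c₀ ≤
          (PMF.binomial (Real.toNNReal p) (Real.toNNReal_le_one.mpr hp1.le) n).toMeasure
            {k | (1 / 2) * Real.sqrt (n * p * (1 - p)) ≤ (k : ℝ) - n * p} := by
  refine ⟨4, by norm_num, 1 / 110592, by norm_num, fun n p hp0 hp1 hv => ?_⟩
  rw [PMF.binomial_toMeasure_setOf hp0.le _ n
    (fun k : ℕ => 1 / 2 * √(n * p * (1 - p)) ≤ (k : ℝ) - n * p)]
  exact ENNReal.ofReal_le_ofReal (le_sum_binomial_upper_tail hp0.le hp1.le hv)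
end
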